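/- arXiv:2210.10729 — 2 statements merged into one kernel-verified Lean document; each statement's English description precedes it below -/
import Mathlib

section
/- For any u ∈ ℝ, the function A ↦ (A - u·I)⁻¹ is matrix convex on Hermitian matrices with spectrum in (u, ∞): for Hermitian A₀, A₁ with all eigenvalues > u and λ ∈ (0,1), ((1-λ)A₀ + λA₁ - uI)⁻¹ ≤ (1-λ)(A₀ - uI)⁻¹ + λ(A₁ - uI)⁻¹ in the Loewner order. -/
/-!
Put `B = A - uI`. For positive definite `B₀, B₁` and `S = M⁻¹` with `M = (1-λ)B₀ + λB₁`, each
`(S - Bᵢ⁻¹) Bᵢ (S - Bᵢ⁻¹) = S Bᵢ S - 2S + Bᵢ⁻¹` is positive semidefinite, and their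
`(1-λ, λ)`-average is `S M S - 2S + (1-λ)B₀⁻¹ + λB₁⁻¹ = (1-λ)B₀⁻¹ + λB₁⁻¹ - M⁻¹`.
-/

open Matrix ComplexOrder
open scoped MatrixOrder

namespace Matrix

variable {n 𝕜 : Type*} [RCLike 𝕜]

lemma convex_setOf_posDef : Convex ℝ {A : Matrix n n 𝕜 | A.PosDef} :=
  convex_iff_forall_pos.mpr fun _ hA _ hB _ _ ha hb _ ↦ (hA.smul ha).add (hB.smul hb)

variable [Fintype n] [DecidableEq n]

lemma IsHermitian.posDef_sub_smul_one {A : Matrix n n 𝕜} (hA : A.IsHermitian) {u : ℝ}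
    (hu : ∀ i, u < hA.eigenvalues i) : (A - (u : 𝕜) • 1).PosDef := by
  rw [hA.spectral_theorem, ← Algebra.algebraMap_eq_smul_one,
    ← AlgHomClass.commutes (Unitary.conjStarAlgAut 𝕜 _ hA.eigenvectorUnitary), ← map_sub,
    algebraMap_eq_diagonal, diagonal_sub, Unitary.conjStarAlgAut_apply,
    Unitary.isUnit_coe.posDef_star_right_conjugate_iff, posDef_diagonal_iff]
  simpa using hu

lemma sub_inv_mul_mul_sub_inv {B S : Matrix n n 𝕜} (hB : IsUnit B) :
    (S - B⁻¹) * B * (S - B⁻¹) = S * B * S - 2 • S + B⁻¹ := by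
  have h₁ : B * B⁻¹ = 1 := mul_nonsing_inv B ((isUnit_iff_isUnit_det B).mp hB)
  have h₂ : B⁻¹ * B = 1 := nonsing_inv_mul B ((isUnit_iff_isUnit_det B).mp hB)
  calc (S - B⁻¹) * B * (S - B⁻¹)
      = S * B * S - S * (B * B⁻¹) - B⁻¹ * B * S + B⁻¹ * B * B⁻¹ := by noncomm_ring
    _ = S * B * S - 2 • S + B⁻¹ := by rw [h₁, h₂]; noncomm_ring

theorem convexOn_inv_setOf_posDef : ConvexOn ℝ {A : Matrix n n 𝕜 | A.PosDef} Inv.inv := by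
  refine ⟨convex_setOf_posDef, fun A hA B hB a b ha hb hab ↦ ?_⟩
  have hM : (a • A + b • B).PosDef := convex_setOf_posDef hA hB ha hb hab
  set S := (a • A + b • B)⁻¹
  have hSMS : S * (a • A + b • B) * S = S := by
    rw [nonsing_inv_mul _ ((isUnit_iff_isUnit_det _).mp hM.isUnit), one_mul]
  have hS : S.IsHermitian := hM.inv.isHermitian
  have hconj : ∀ C : Matrix n n 𝕜, C.PosDef → ((S - C⁻¹) * C * (S - C⁻¹)).PosSemidef :=
    fun C hC ↦ by
      simpa [hS.eq, hC.inv.isHermitian.eq] using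
        hC.posSemidef.mul_mul_conjTranspose_same (S - C⁻¹)
  have key : a • A⁻¹ + b • B⁻¹ - S =
      a • ((S - A⁻¹) * A * (S - A⁻¹)) + b • ((S - B⁻¹) * B * (S - B⁻¹)) := by
    have hSMS' : a • (S * A * S) + b • (S * B * S) = S := by
      conv_rhs => rw [← hSMS]
      rw [mul_add, add_mul, Matrix.mul_smul, Matrix.smul_mul, Matrix.mul_smul,
        Matrix.smul_mul]
    rw [sub_inv_mul_mul_sub_inv hA.isUnit, sub_inv_mul_mul_sub_inv hB.isUnit]
    linear_combination (norm := module) -hSMS' + (2 * hab) • S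
  rw [le_iff, key]
  exact ((hconj A hA).smul ha).add ((hconj B hB).smul hb)

end Matrix

/-- For `u ∈ ℝ`, the map `A ↦ (A - uI)⁻¹` is matrix convex on Hermitian matrices with
spectrum in `(u, ∞)`. -/
theorem resolvent_matrix_convex_above {n : ℕ} (u : ℝ)
    (A₀ A₁ : Matrix (Fin n) (Fin n) ℂ) (h₀ : A₀.IsHermitian) (h₁ : A₁.IsHermitian)
    (he₀ : ∀ i, u < h₀.eigenvalues i) (he₁ : ∀ i, u < h₁.eigenvalues i)
    (l : ℝ) (hl : l ∈ Set.Ioo (0 : ℝ) 1) :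
    ((1 - l) • (A₀ - (u : ℂ) • 1)⁻¹ + l • (A₁ - (u : ℂ) • 1)⁻¹
      - ((1 - l) • A₀ + l • A₁ - (u : ℂ) • 1)⁻¹).PosSemidef := by
  have hB₀ : (A₀ - (u : ℂ) • 1).PosDef := h₀.posDef_sub_smul_one he₀
  have hB₁ : (A₁ - (u : ℂ) • 1).PosDef := h₁.posDef_sub_smul_one he₁
  have hconv := convexOn_inv_setOf_posDef.2 hB₀ hB₁ (sub_nonneg.2 hl.2.le) hl.1.le
    (sub_add_cancel 1 l)
  have hcomb : (1 - l) • (A₀ - (u : ℂ) • 1) + l • (A₁ - (u : ℂ) • 1)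
      = (1 - l) • A₀ + l • A₁ - (u : ℂ) • 1 := by
    module
  rwa [hcomb, le_iff] at hconv
end

section
/- Joint concavity of the k-fold parallel sum: for any k ≥ 1, the map (A₁, …, A_k) ↦ (A₁⁻¹ + ⋯ + A_k⁻¹)⁻¹ is jointly concave on k-tuples of positive definite Hermitian n×n matrices, in the Loewner order. -/
open Matrix ComplexOrder Finset

/-! The quadratic form of the parallel sum `P(A) = (∑ Aⱼ⁻¹)⁻¹` has the variational description
`⟪x, P(A) x⟫ = min {∑ ⟪yⱼ, Aⱼ yⱼ⟫ | ∑ yⱼ = x}`, the minimum being attained at `yⱼ = Aⱼ⁻¹ P(A) x`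
(complete the square in each `yⱼ`). For fixed `y` the right-hand side is linear in `(A₁, …, A_k)`,
and a pointwise minimum of linear functions is concave. -/

namespace Matrix

variable {𝕜 m ι : Type*} [RCLike 𝕜] [Fintype m] [Fintype ι]

/-- `⟪y - u, A (y - u)⟫ ≥ 0`, expanded. -/
theorem PosSemidef.dotProduct_add_dotProduct_sub_le {A : Matrix m m 𝕜} (hA : A.PosSemidef)
    {u z : m → 𝕜} (hu : A *ᵥ u = z) (y : m → 𝕜) :
    star y ⬝ᵥ z + star z ⬝ᵥ y - star u ⬝ᵥ z ≤ star y ⬝ᵥ (A *ᵥ y) := by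
  have hzy : star u ⬝ᵥ (A *ᵥ y) = star z ⬝ᵥ y := by
    rw [dotProduct_mulVec, ← hu, star_mulVec, hA.isHermitian.eq]
  have hsq := hA.dotProduct_mulVec_nonneg (y - u)
  rw [mulVec_sub, hu, star_sub, sub_dotProduct, dotProduct_sub, dotProduct_sub, hzy] at hsq
  rw [← sub_nonneg]
  convert hsq using 1
  ring

variable [DecidableEq m]

noncomputable def parallelSum (A : ι → Matrix m m 𝕜) : Matrix m m 𝕜 := (∑ j, (A j)⁻¹)⁻¹

theorem PosDef.parallelSum [Nonempty ι] {A : ι → Matrix m m 𝕜} (hA : ∀ j, (A j).PosDef) :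
    (parallelSum A).PosDef :=
  (posDef_sum univ_nonempty fun j _ => (hA j).inv).inv

theorem PosDef.mulVec_inv_mulVec {A : Matrix m m 𝕜} (hA : A.PosDef) (v : m → 𝕜) :
    A *ᵥ (A⁻¹ *ᵥ v) = v := by
  rw [mulVec_mulVec, mul_nonsing_inv A ((isUnit_iff_isUnit_det A).mp hA.isUnit), one_mulVec]

theorem sum_inv_mulVec_parallelSum_mulVec [Nonempty ι] {A : ι → Matrix m m 𝕜}
    (hA : ∀ j, (A j).PosDef) (x : m → 𝕜) :
    ∑ j, (A j)⁻¹ *ᵥ (parallelSum A *ᵥ x) = x := by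
  rw [← sum_mulVec]
  exact (posDef_sum univ_nonempty fun j _ => (hA j).inv).mulVec_inv_mulVec x

theorem isLeast_dotProduct_parallelSum_mulVec [Nonempty ι] {A : ι → Matrix m m 𝕜}
    (hA : ∀ j, (A j).PosDef) (x : m → 𝕜) :
    IsLeast ((fun y : ι → m → 𝕜 => ∑ j, star (y j) ⬝ᵥ (A j *ᵥ y j)) '' {y | ∑ j, y j = x})
      (star x ⬝ᵥ (parallelSum A *ᵥ x)) := by
  set z := parallelSum A *ᵥ x
  have hu : ∀ j, A j *ᵥ ((A j)⁻¹ *ᵥ z) = z := fun j => (hA j).mulVec_inv_mulVec z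
  have hux : ∑ j, (A j)⁻¹ *ᵥ z = x := sum_inv_mulVec_parallelSum_mulVec hA x
  have hzx : star z ⬝ᵥ x = star x ⬝ᵥ z := by
    rw [star_mulVec, (PosDef.parallelSum hA).isHermitian.eq, ← dotProduct_mulVec]
  refine ⟨⟨fun j => (A j)⁻¹ *ᵥ z, hux, ?_⟩, ?_⟩
  · simp only [hu]
    rw [← sum_dotProduct, ← star_sum, hux]
  · rintro _ ⟨y, hy : ∑ j, y j = x, rfl⟩
    calc star x ⬝ᵥ z
        = ∑ j, (star (y j) ⬝ᵥ z + star z ⬝ᵥ y j - star ((A j)⁻¹ *ᵥ z) ⬝ᵥ z) := by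
          rw [sum_sub_distrib, sum_add_distrib, ← sum_dotProduct, ← sum_dotProduct,
            ← dotProduct_sum, ← star_sum, ← star_sum, hy, hux, hzx]
          ring
      _ ≤ ∑ j, star (y j) ⬝ᵥ (A j *ᵥ y j) :=
          sum_le_sum fun j _ => (hA j).posSemidef.dotProduct_add_dotProduct_sub_le (hu j) (y j)

theorem posSemidef_parallelSum_smul_add_smul_sub [Nonempty ι] {A₀ A₁ : ι → Matrix m m 𝕜}
    (h₀ : ∀ j, (A₀ j).PosDef) (h₁ : ∀ j, (A₁ j).PosDef) {a b : ℝ} (ha : 0 < a) (hb : 0 < b) :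
    (parallelSum (fun j => a • A₀ j + b • A₁ j)
      - (a • parallelSum A₀ + b • parallelSum A₁)).PosSemidef := by
  have hC : ∀ j, (a • A₀ j + b • A₁ j).PosDef := fun j => ((h₀ j).smul ha).add ((h₁ j).smul hb)
  refine posSemidef_iff_dotProduct_mulVec.mpr ⟨(PosDef.parallelSum hC).isHermitian.sub
    (((PosDef.parallelSum h₀).smul ha).add ((PosDef.parallelSum h₁).smul hb)).isHermitian,
    fun x => ?_⟩
  obtain ⟨y, hy, hCy⟩ := (isLeast_dotProduct_parallelSum_mulVec hC x).1
  have hy₀ := (isLeast_dotProduct_parallelSum_mulVec h₀ x).2 ⟨y, hy, rfl⟩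
  have hy₁ := (isLeast_dotProduct_parallelSum_mulVec h₁ x).2 ⟨y, hy, rfl⟩
  rw [sub_mulVec, dotProduct_sub, sub_nonneg, add_mulVec, smul_mulVec, smul_mulVec,
    dotProduct_add, dotProduct_smul, dotProduct_smul, ← hCy]
  calc a • (star x ⬝ᵥ (parallelSum A₀ *ᵥ x)) + b • (star x ⬝ᵥ (parallelSum A₁ *ᵥ x))
      ≤ a • ∑ j, star (y j) ⬝ᵥ (A₀ j *ᵥ y j) + b • ∑ j, star (y j) ⬝ᵥ (A₁ j *ᵥ y j) := by
        gcongr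
    _ = ∑ j, star (y j) ⬝ᵥ ((a • A₀ j + b • A₁ j) *ᵥ y j) := by
        simp only [smul_sum, ← sum_add_distrib, add_mulVec, smul_mulVec, dotProduct_add,
          dotProduct_smul]

end Matrix

/-- Joint concavity of the `k`-fold parallel sum `(A₁, …, A_k) ↦ (A₁⁻¹ + ⋯ + A_k⁻¹)⁻¹` on
`k`-tuples of positive definite Hermitian matrices, in the Loewner order. -/
theorem parallel_sum_k_jointly_concave {n k : ℕ} (hk : 1 ≤ k)
    (A₀ A₁ : Fin k → Matrix (Fin n) (Fin n) ℂ)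
    (h₀ : ∀ j, (A₀ j).PosDef) (h₁ : ∀ j, (A₁ j).PosDef)
    (l : ℝ) (hl : l ∈ Set.Ioo (0 : ℝ) 1) :
    ((∑ j, ((1 - l) • A₀ j + l • A₁ j)⁻¹)⁻¹
      - ((1 - l) • (∑ j, (A₀ j)⁻¹)⁻¹ + l • (∑ j, (A₁ j)⁻¹)⁻¹)).PosSemidef := by
  have : Nonempty (Fin k) := ⟨⟨0, hk⟩⟩
  exact posSemidef_parallelSum_smul_add_smul_sub h₀ h₁ (sub_pos.mpr hl.2) hl.1
end
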